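/- arXiv:0811.0949 — 3 statements merged into one kernel-verified Lean document; each statement's English description precedes it below -/
import Mathlib

section
/- Let G be a finite graph, u, v ∈ V(G), and T ⊆ V(G). In the percolation model E₂^{p,T} on the bunkbed graph G̃ = G × K₂ (vertical edges present exactly at T, horizontal edges e₀, e₁ present independently with probability p_e), if T contains a cutset of G separating u from v, or if u ∈ T, or if v ∈ T, then P(u₀ ↔ v₀) = P(u₀ ↔ v₁). -/
open scoped Classical

noncomputable section

/-- Indicator of a proposition, as a real number. -/
def pInd (P : Prop) : ℝ := if P then 1 else 0

variable {V : Type}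

/-- The bunkbed presence graph: `σ e b` tells whether the copy of edge `e` in layer `b`
is present; vertical edges are present exactly at vertices of `T`. -/
def bbGraph (G : SimpleGraph V) (σ : Sym2 V → Bool → Bool) (T : Set V) :
    SimpleGraph (V × Bool) where
  Adj a b := (a.2 = b.2 ∧ G.Adj a.1 b.1 ∧ σ s(a.1, b.1) a.2 = true) ∨
    (a.1 = b.1 ∧ a.2 ≠ b.2 ∧ a.1 ∈ T)
  symm := by
    constructor
    intro a b h
    rcases h with ⟨h1, h2, h3⟩ | ⟨h1, h2, h3⟩
    · exact Or.inl ⟨h1.symm, h2.symm, by rwa [Sym2.eq_swap, ← h1]⟩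
    · exact Or.inr ⟨h1.symm, Ne.symm h2, h1 ▸ h3⟩
  loopless := by
    constructor
    rintro a (⟨h1, h2, h3⟩ | ⟨h1, h2, h3⟩)
    · exact G.irrefl h2
    · exact h2 rfl

/-- Weight of a horizontal configuration in model E₂: each copy of an edge `e` of `G`
is present with probability `p e`, independently (non-edges carry weight 1/2 each so
that the total mass is 1). -/
def wE2 [Fintype V] [DecidableEq V] (G : SimpleGraph V) (p : Sym2 V → ℝ)
    (σ : Sym2 V → Bool → Bool) : ℝ :=
  ∏ e : Sym2 V, ∏ b : Bool,
    if e ∈ G.edgeSet then (if σ e b then p e else 1 - p e) else 1 / 2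

/-- Connection probability in model E₂^{p,T}. -/
def PE2 [Fintype V] [DecidableEq V] (G : SimpleGraph V) (p : Sym2 V → ℝ) (T : Set V)
    (x y : V × Bool) : ℝ :=
  ∑ σ : Sym2 V → Bool → Bool, wE2 G p σ * pInd ((bbGraph G σ T).Reachable x y)

/-- Connection probability in model E₁^p: every edge of the bunkbed graph (horizontal
and vertical) present independently with probability `p`. -/
def PE1 [Fintype V] [DecidableEq V] (G : SimpleGraph V) (p : ℝ) (x y : V × Bool) : ℝ :=
  ∑ σ : Sym2 V → Bool → Bool, ∑ η : V → Bool,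
    wE2 G (fun _ => p) σ * (∏ v : V, if η v then p else 1 - p) *
      pInd ((bbGraph G σ {v | η v = true}).Reachable x y)

/-- Deleting a set of vertices from a simple graph (keeping the vertex type). -/
def delVerts (G : SimpleGraph V) (C : Set V) : SimpleGraph V where
  Adj a b := G.Adj a b ∧ a ∉ C ∧ b ∉ C
  symm := ⟨fun _ _ ⟨h, ha, hb⟩ => ⟨h.symm, hb, ha⟩⟩
  loopless := ⟨fun _ ⟨h, _, _⟩ => G.irrefl h⟩

/-!
Swapping the two layers over a set `S` of vertices is a bijection of configurations (flip the
horizontal edges inside `S`) that preserves the weight of model E₂. If every vertex of `S`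
with a neighbour outside `S` lies in `T`, it maps open paths to open paths, since a horizontal
edge leaving `S` can be rerouted through the vertical edge at its endpoint in `S`. For the
cutset case take `S` to be the component of `v` in `G ∖ C` together with `C`: then the swap
fixes `u₀` and exchanges `v₀` with `v₁`. If `v ∈ T`, the vertical edge at `v` makes the two
events coincide; if `u ∈ T`, swap all of `V` and use the vertical edge at `u`.
-/

def layerSwap (S : Set V) (a : V × Bool) : V × Bool :=
  (a.1, if a.1 ∈ S then !a.2 else a.2)

def mirrorConfig (S : Set V) (σ : Sym2 V → Bool → Bool) : Sym2 V → Bool → Bool :=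
  fun e b => if e ∈ S.sym2 then σ e (!b) else σ e b

def innerBoundary (G : SimpleGraph V) (S : Set V) : Set V :=
  {x | x ∈ S ∧ ∃ y ∉ S, G.Adj x y}

lemma innerBoundary_univ (G : SimpleGraph V) : innerBoundary G Set.univ = ∅ := by
  simp [innerBoundary]

lemma innerBoundary_component_union_subset (G : SimpleGraph V) (C : Set V) (v : V) :
    innerBoundary G ({x | (delVerts G C).Reachable v x} ∪ C) ⊆ C := by
  rintro x ⟨hvx | hxC, y, hy, hxy⟩
  · by_contra hxC
    have hyC : y ∉ C := fun hyC => hy (Or.inr hyC)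
    exact hy (Or.inl (hvx.trans (SimpleGraph.Adj.reachable ⟨hxy, hxC, hyC⟩)))
  · exact hxC

lemma layerSwap_involutive (S : Set V) : Function.Involutive (layerSwap S) := by
  rintro ⟨x, b⟩
  by_cases hx : x ∈ S <;> simp [layerSwap, hx]

lemma mirrorConfig_involutive (S : Set V) : Function.Involutive (mirrorConfig S) := by
  intro σ
  funext e b
  by_cases he : e ∈ S.sym2 <;> simp [mirrorConfig, he]

lemma wE2_mirrorConfig [Fintype V] [DecidableEq V] (G : SimpleGraph V) (p : Sym2 V → ℝ)
    (S : Set V) (σ : Sym2 V → Bool → Bool) : wE2 G p (mirrorConfig S σ) = wE2 G p σ := by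
  refine Finset.prod_congr rfl fun e _ => ?_
  by_cases he : e ∈ S.sym2
  · simp only [mirrorConfig, he, if_true, Fintype.prod_bool, Bool.not_true, Bool.not_false]
    exact mul_comm _ _
  · simp [mirrorConfig, he]

section bbGraph

variable {G : SimpleGraph V} {σ : Sym2 V → Bool → Bool} {S T : Set V}

lemma bbGraph_adj_horizontal {x y : V} {b : Bool} (hxy : G.Adj x y) (hσ : σ s(x, y) b = true) :
    (bbGraph G σ T).Adj (x, b) (y, b) :=
  Or.inl ⟨rfl, hxy, hσ⟩

lemma bbGraph_adj_vertical {x : V} {b c : Bool} (hx : x ∈ T) (hbc : b ≠ c) :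
    (bbGraph G σ T).Adj (x, b) (x, c) :=
  Or.inr ⟨rfl, hbc, hx⟩

lemma bbGraph_reachable_not_iff {a : V × Bool} {w : V} (hw : w ∈ T) (b : Bool) :
    (bbGraph G σ T).Reachable a (w, !b) ↔ (bbGraph G σ T).Reachable a (w, b) :=
  ⟨fun h => h.trans (bbGraph_adj_vertical hw (by simp)).reachable,
    fun h => h.trans (bbGraph_adj_vertical hw (by simp)).reachable⟩

lemma bbGraph_mirrorConfig_reachable_of_crossing (hS : innerBoundary G S ⊆ T) {x y : V}
    {b : Bool} (hxy : G.Adj x y) (hx : x ∈ S) (hy : y ∉ S) (hσ : σ s(x, y) b = true) :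
    (bbGraph G (mirrorConfig S σ) T).Reachable (x, !b) (y, b) :=
  (bbGraph_adj_vertical (hS ⟨hx, y, hy, hxy⟩) (by simp)).reachable.trans
    (bbGraph_adj_horizontal hxy (by simp [mirrorConfig, hy, hσ])).reachable

lemma bbGraph_mirrorConfig_reachable_of_adj (hS : innerBoundary G S ⊆ T) {a c : V × Bool}
    (h : (bbGraph G σ T).Adj a c) :
    (bbGraph G (mirrorConfig S σ) T).Reachable (layerSwap S a) (layerSwap S c) := by
  obtain ⟨x, b⟩ := a
  obtain ⟨y, c⟩ := c
  rcases h with ⟨rfl, hxy, hσ⟩ | ⟨rfl, hbc, hxT⟩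
  · by_cases hx : x ∈ S <;> by_cases hy : y ∈ S
    · simpa [layerSwap, hx, hy] using
        (bbGraph_adj_horizontal (T := T) hxy (by simpa [mirrorConfig, hx, hy] using hσ)).reachable
    · simpa [layerSwap, hx, hy] using
        bbGraph_mirrorConfig_reachable_of_crossing hS hxy hx hy hσ
    · rw [Sym2.eq_swap] at hσ
      simpa [layerSwap, hx, hy] using
        (bbGraph_mirrorConfig_reachable_of_crossing hS hxy.symm hy hx hσ).symm
    · simpa [layerSwap, hx, hy] using
        (bbGraph_adj_horizontal (T := T) hxy (by simpa [mirrorConfig, hx] using hσ)).reachable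
  · refine (bbGraph_adj_vertical hxT ?_).reachable
    by_cases hx : x ∈ S <;> simpa [layerSwap, hx] using hbc

lemma bbGraph_mirrorConfig_reachable (hS : innerBoundary G S ⊆ T) {a c : V × Bool}
    (h : (bbGraph G σ T).Reachable a c) :
    (bbGraph G (mirrorConfig S σ) T).Reachable (layerSwap S a) (layerSwap S c) := by
  obtain ⟨w⟩ := h
  induction w with
  | nil => rfl
  | cons hadj _ ih => exact (bbGraph_mirrorConfig_reachable_of_adj hS hadj).trans ih

lemma bbGraph_mirrorConfig_reachable_iff (hS : innerBoundary G S ⊆ T) {a c : V × Bool} :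
    (bbGraph G (mirrorConfig S σ) T).Reachable (layerSwap S a) (layerSwap S c) ↔
      (bbGraph G σ T).Reachable a c := by
  refine ⟨fun h => ?_, bbGraph_mirrorConfig_reachable hS⟩
  simpa only [mirrorConfig_involutive S σ, layerSwap_involutive S a, layerSwap_involutive S c]
    using bbGraph_mirrorConfig_reachable hS h

end bbGraph

section PE2

variable [Fintype V] [DecidableEq V] {G : SimpleGraph V} (p : Sym2 V → ℝ) {T : Set V}

lemma PE2_comm (x y : V × Bool) : PE2 G p T x y = PE2 G p T y x := by
  simp only [PE2, SimpleGraph.reachable_comm]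

lemma PE2_not_right {w : V} (hw : w ∈ T) (x : V × Bool) (b : Bool) :
    PE2 G p T x (w, !b) = PE2 G p T x (w, b) := by
  simp only [PE2, bbGraph_reachable_not_iff hw]

lemma PE2_layerSwap {S : Set V} (hS : innerBoundary G S ⊆ T) (x y : V × Bool) :
    PE2 G p T (layerSwap S x) (layerSwap S y) = PE2 G p T x y :=
  (Fintype.sum_bijective (mirrorConfig S) (mirrorConfig_involutive S).bijective _ _ fun σ => by
    rw [wE2_mirrorConfig, bbGraph_mirrorConfig_reachable_iff hS]).symm

lemma PE2_eq_of_innerBoundary_subset {S : Set V} (hS : innerBoundary G S ⊆ T) {u v : V}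
    (hu : u ∉ S) (hv : v ∈ S) :
    PE2 G p T (u, false) (v, false) = PE2 G p T (u, false) (v, true) := by
  simpa [layerSwap, hu, hv] using (PE2_layerSwap p hS (u, false) (v, false)).symm

end PE2

theorem bunkbed_E2_eq_of_cutset_general [Fintype V] [DecidableEq V] (G : SimpleGraph V)
    (u v : V) (T : Set V) (p : Sym2 V → ℝ)
    (h : (∃ C : Set V, C ⊆ T ∧ u ∉ C ∧ v ∉ C ∧ ¬ (delVerts G C).Reachable u v) ∨
      u ∈ T ∨ v ∈ T) :
    PE2 G p T (u, false) (v, false) = PE2 G p T (u, false) (v, true) := by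
  rcases h with ⟨C, hCT, huC, -, hsep⟩ | hu | hv
  · exact PE2_eq_of_innerBoundary_subset p
      ((innerBoundary_component_union_subset G C v).trans hCT)
      (fun hu => hu.elim (fun hvu => hsep hvu.symm) huC) (Or.inl .rfl)
  · calc PE2 G p T (u, false) (v, false) = PE2 G p T (u, true) (v, true) := by
          simpa [layerSwap] using (PE2_layerSwap p (S := Set.univ)
            (by simp [innerBoundary_univ]) (u, false) (v, false)).symm
      _ = PE2 G p T (v, true) (u, true) := PE2_comm p _ _
      _ = PE2 G p T (v, true) (u, false) := PE2_not_right p hu _ false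
      _ = PE2 G p T (u, false) (v, true) := PE2_comm p _ _
  · exact (PE2_not_right p hv _ false).symm

/-- If `T` contains a cutset of `G` separating `u` from `v`, or `u ∈ T`, or `v ∈ T`,
then the two bunkbed connection probabilities in model E₂^{p,T} are equal. -/
theorem bunkbed_E2_eq_of_cutset [Fintype V] [DecidableEq V] (G : SimpleGraph V)
    (hconn : G.Connected) (u v : V) (T : Set V) (p : Sym2 V → ℝ)
    (hp : ∀ e, 0 ≤ p e ∧ p e ≤ 1)
    (h : (∃ C : Set V, C ⊆ T ∧ u ∉ C ∧ v ∉ C ∧ ¬ (delVerts G C).Reachable u v) ∨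
      u ∈ T ∨ v ∈ T) :
    PE2 G p T (u, false) (v, false) = PE2 G p T (u, false) (v, true) :=
  bunkbed_E2_eq_of_cutset_general G u v T p h
end
end

section
/- If the bunkbed inequality in model E₃^{T'} (each edge of G' colored red or blue independently with probability 1/2, where a walk may change color only at vertices of T'; equivalently exactly one of e₀, e₁ present in the bunkbed graph) holds for every minor G' of G and every T' ⊆ V(G'), then the bunkbed inequality in model E₂^{p,T} holds for G for every probability vector p and every T ⊆ V(G), and hence the bunkbed inequality in model E₁^p holds for G for every p ∈ [0,1]. -/
open scoped Classical

noncomputable section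

variable {V : Type}

/-- The colored presence graph of model E₃: each edge of `G` is colored red (`false`,
downstairs) or blue (`true`, upstairs) and lives in the layer given by its color;
vertical edges are present exactly at the transversal vertices `T`. A walk in the
colored graph changing colors only at `T` is the same thing as a path in this graph. -/
def ccGraph (G : SimpleGraph V) (c : Sym2 V → Bool) (T : Set V) :
    SimpleGraph (V × Bool) where
  Adj a b := (a.2 = b.2 ∧ G.Adj a.1 b.1 ∧ c s(a.1, b.1) = a.2) ∨
    (a.1 = b.1 ∧ a.2 ≠ b.2 ∧ a.1 ∈ T)
  symm := by
    constructor
    intro a b h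
    rcases h with ⟨h1, h2, h3⟩ | ⟨h1, h2, h3⟩
    · exact Or.inl ⟨h1.symm, h2.symm, by rwa [Sym2.eq_swap, ← h1]⟩
    · exact Or.inr ⟨h1.symm, Ne.symm h2, h1 ▸ h3⟩
  loopless := by
    constructor
    rintro a (⟨h1, h2, h3⟩ | ⟨h1, h2, h3⟩)
    · exact G.irrefl h2
    · exact h2 rfl

/-- Connection probability in model E₃^T (uniform independent red/blue coloring). -/
def PE3 [Fintype V] [DecidableEq V] (G : SimpleGraph V) (T : Set V) (x y : V × Bool) : ℝ :=
  (∑ c : Sym2 V → Bool, pInd ((ccGraph G c T).Reachable x y)) / 2 ^ Fintype.card (Sym2 V)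

/-- `G'` is a minor of `G`: there are pairwise disjoint branch sets `f a ⊆ V(G)`,
one for each vertex `a` of `G'`, each inducing a connected (nonempty) subgraph of `G`,
such that every edge of `G'` is realized by an edge of `G` between the corresponding
branch sets. -/
def IsMinor {W : Type} (G' : SimpleGraph W) (G : SimpleGraph V) : Prop :=
  ∃ f : W → Set V,
    (∀ a, (G.induce (f a)).Connected) ∧
    (∀ a b, a ≠ b → Disjoint (f a) (f b)) ∧
    (∀ a b, G'.Adj a b → ∃ x ∈ f a, ∃ y ∈ f b, G.Adj x y)

/-!
Embed E₂ in a mixed model in which the two copies of each edge are both present, both absent,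
exactly one present (in a uniformly random layer), or present independently with probability
`p e`. An independent edge is a convex combination of the other three states, with weights
`p²`, `(1 - p)²`, `2p(1 - p)`. Call edges with both copies present doubled. A one-copy edge
whose endpoints are joined by doubled edges can be deleted, and two one-copy edges joining the
same pair of doubled components behave, with probability `1/2` each, like a single one-copy
edge or like a doubled edge. When none of these reductions applies, contracting the components
of the doubled edges gives a minor of `G` on which the mixed model is exactly E₃, the
transversal vertices being the components that meet `T`. Induction on a potential that each
reduction decreases gives the bunkbed inequality for E₂, and E₁ is the average of E₂ over the
random set of vertical edges.
-/

namespace Bunkbed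

section WeightedSum

variable {ι α : Type*} [Fintype ι] [DecidableEq ι] [Fintype α]

def weightedSum (ν : ι → α → ℝ) (g : (ι → α) → ℝ) : ℝ :=
  ∑ σ : ι → α, (∏ i, ν i (σ i)) * g σ

theorem weightedSum_congr {ν : ι → α → ℝ} {g g' : (ι → α) → ℝ}
    (h : ∀ σ, (∀ i, ν i (σ i) ≠ 0) → g σ = g' σ) : weightedSum ν g = weightedSum ν g' := by
  refine Finset.sum_congr rfl fun σ _ => ?_
  by_cases hσ : ∀ i, ν i (σ i) ≠ 0
  · rw [h σ hσ]
  · push Not at hσ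
    obtain ⟨i, hi⟩ := hσ
    rw [Finset.prod_eq_zero (Finset.mem_univ i) hi, zero_mul, zero_mul]

theorem weightedSum_const (c : ℝ) (g : (ι → α) → ℝ) :
    weightedSum (fun _ _ => c) g = c ^ Fintype.card ι * ∑ σ, g σ := by
  simp [weightedSum, Finset.mul_sum]

theorem sum_sum_update_eq (i : ι) (F : (ι → α) → α → ℝ) :
    ∑ σ : ι → α, ∑ a, F (Function.update σ i a) (σ i) = ∑ σ, ∑ a, F σ a := by
  have hinv : Function.Involutive fun p : (ι → α) × α => (Function.update p.1 i p.2, p.1 i) :=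
    fun p => by simp
  simp only [← Fintype.sum_prod_type']
  exact Equiv.sum_comp (hinv.toPerm _) fun p : (ι → α) × α => F p.1 p.2

theorem weightedSum_update (ν : ι → α → ℝ) (i : ι) (hν : ∑ a, ν i a = 1) (μ : α → ℝ)
    (g : (ι → α) → ℝ) :
    weightedSum (Function.update ν i μ) g =
      ∑ a, μ a * weightedSum ν fun σ => g (Function.update σ i a) := by
  set Q : (ι → α) → ℝ := fun σ => ∏ j ∈ Finset.univ.erase i, ν j (σ j)
  have hsplit : ∀ (μ' : α → ℝ) (σ : ι → α),
      ∏ j, Function.update ν i μ' j (σ j) = μ' (σ i) * Q σ := by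
    intro μ' σ
    rw [← Finset.mul_prod_erase _ _ (Finset.mem_univ i), Function.update_self]
    exact congrArg _ (Finset.prod_congr rfl fun j hj => by
      rw [Function.update_of_ne (Finset.ne_of_mem_erase hj)])
  have hQ : ∀ σ a, Q (Function.update σ i a) = Q σ := fun σ a =>
    Finset.prod_congr rfl fun j hj => by rw [Function.update_of_ne (Finset.ne_of_mem_erase hj)]
  have hν' : ∀ σ : ι → α, ∏ j, ν j (σ j) = ν i (σ i) * Q σ := by
    simpa only [Function.update_eq_self] using hsplit (ν i)
  unfold weightedSum
  simp_rw [hsplit, hν', Finset.mul_sum]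
  rw [Finset.sum_comm]
  calc ∑ σ : ι → α, μ (σ i) * Q σ * g σ
      = ∑ σ : ι → α, ∑ a, μ (σ i) * (ν i a * Q σ * g σ) := by
        simp_rw [← Finset.mul_sum, ← Finset.sum_mul, hν]; ring_nf
    _ = _ := by
        rw [← sum_sum_update_eq i]
        simp [hQ]

end WeightedSum

section LawMap

variable {α β : Type*} [Fintype β]

def lawMap (κ : β → ℝ) (f : β → α) (a : α) : ℝ :=
  ∑ b, if f b = a then κ b else 0

theorem exists_eq_of_lawMap_ne_zero {κ : β → ℝ} {f : β → α} {a : α} (h : lawMap κ f a ≠ 0) :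
    ∃ b, f b = a := by
  by_contra! hf
  simp [lawMap, hf] at h

theorem sum_lawMap_mul [Fintype α] (κ : β → ℝ) (f : β → α) (R : α → ℝ) :
    ∑ a, lawMap κ f a * R a = ∑ b, κ b * R (f b) := by
  simp only [lawMap, Finset.sum_mul, ite_mul, zero_mul]
  rw [Finset.sum_comm]
  simp

theorem weightedSum_lawMap {ι : Type*} [Fintype ι] [DecidableEq ι] [Fintype α]
    (κ : ι → β → ℝ) (f : ι → β → α) (g : (ι → α) → ℝ) :
    weightedSum (fun i => lawMap (κ i) (f i)) g =
      weightedSum κ fun τ => g fun i => f i (τ i) := by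
  unfold weightedSum lawMap
  simp_rw [Fintype.prod_sum, Finset.prod_ite_zero, Finset.sum_mul]
  rw [Finset.sum_comm]
  refine Finset.sum_congr rfl fun τ _ => ?_
  simp only [Finset.mem_univ, forall_const, ← funext_iff, ite_mul, zero_mul]
  rw [Finset.sum_ite_eq]
  simp

end LawMap

theorem sum_comp_injective {α β γ : Type*} [Fintype α] [Nonempty α] [Fintype β] [DecidableEq β]
    [Fintype γ] [DecidableEq γ] {j : β → γ} (hj : Function.Injective j) (F : (β → α) → ℝ) :
    (∑ c : γ → α, F (c ∘ j)) / Fintype.card α ^ Fintype.card γ =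
      (∑ b, F b) / Fintype.card α ^ Fintype.card β := by
  let e := Equiv.piEquivPiSubtypeProd (· ∈ Set.range j) fun _ => α
  let r := (Equiv.ofInjective j hj).symm.arrowCongr (Equiv.refl α)
  have hcomp : ∀ c : γ → α, c ∘ j = r (e c).1 := fun c => by
    funext y; simp [e, r, Equiv.arrowCongr_apply]
  have hsum : ∑ c : γ → α, F (c ∘ j) =
      Fintype.card α ^ (Fintype.card γ - Fintype.card β) * ∑ b, F b := by
    rw [← e.symm.sum_comp]
    simp_rw [hcomp, Equiv.apply_symm_apply, Fintype.sum_prod_type, Finset.sum_const,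
      Finset.card_univ, nsmul_eq_mul, ← Finset.mul_sum, r.sum_comp F]
    rw [Fintype.card_fun, Fintype.card_subtype_compl, Set.card_range_of_injective hj]
    push_cast; rfl
  have hle : Fintype.card β ≤ Fintype.card γ := Fintype.card_le_of_injective j hj
  have hα : (Fintype.card α : ℝ) ≠ 0 := by positivity
  rw [hsum, pow_sub₀ _ hα hle]
  field_simp

/-- Copies of an edge in the mixed model; `one` means exactly one copy, in a uniformly random
layer, and `indep` that each copy is present independently. -/
inductive Status
  | both | neither | one | indep
  deriving DecidableEq

namespace Status

/-- The layers holding a copy of the edge, for a resolved state driven by a fair bit `b`; for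
`one` the copy lies in layer `b`. The value at `indep` is never used. -/
def pick : Status → Bool → Bool → Bool
  | both, _ => fun _ => true
  | neither, _ => fun _ => false
  | one, b => fun j => j == b
  | indep, _ => fun _ => false

def bern (q : ℝ) (b : Bool) : ℝ := if b then q else 1 - q

def law (q : ℝ) : Status → (Bool → Bool) → ℝ
  | indep => fun a => ∏ j, bern q (a j)
  | s => lawMap (fun _ => 1 / 2) s.pick

theorem law_of_ne_indep {s : Status} (hs : s ≠ indep) (q : ℝ) :
    s.law q = lawMap (fun _ => 1 / 2) s.pick := by
  cases s <;> first | rfl | exact absurd rfl hs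

theorem sum_law_mul {s : Status} (hs : s ≠ indep) (q : ℝ) (R : (Bool → Bool) → ℝ) :
    ∑ a, s.law q a * R a = (R (s.pick false) + R (s.pick true)) / 2 := by
  rw [law_of_ne_indep hs, sum_lawMap_mul, Fintype.sum_bool]
  ring

theorem sum_law (q : ℝ) (s : Status) : ∑ a, s.law q a = 1 := by
  cases s
  case indep =>
    show ∑ a : Bool → Bool, ∏ j, bern q (a j) = 1
    rw [← Fintype.prod_sum fun _ b => bern q b]
    simp [bern]
  all_goals simpa using sum_law_mul (by decide) q fun _ => 1

theorem law_indep (q : ℝ) :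
    indep.law q = q ^ 2 • both.law q + (1 - q) ^ 2 • neither.law q +
      (2 * q * (1 - q)) • one.law q := by
  funext a
  obtain ⟨x, y, rfl⟩ : ∃ x y, a = fun j => if j then y else x :=
    ⟨a false, a true, funext fun j => by cases j <;> rfl⟩
  cases x <;> cases y <;>
    simp [law, lawMap, pick, bern, funext_iff] <;> ring

theorem eq_pick_of_law_ne_zero {s : Status} (hs : s ≠ indep) {q : ℝ} {a : Bool → Bool}
    (h : s.law q a ≠ 0) : ∃ b, s.pick b = a := by
  rw [law_of_ne_indep hs] at h
  exact exists_eq_of_lawMap_ne_zero h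

def cost : Status → ℕ
  | indep => 2
  | one => 1
  | _ => 0

end Status


theorem reachable_map_of_adj {α β : Type*} {H₁ : SimpleGraph α} {H₂ : SimpleGraph β} (f : α → β)
    (h : ∀ a b, H₁.Adj a b → H₂.Reachable (f a) (f b)) {x y : α} (hr : H₁.Reachable x y) :
    H₂.Reachable (f x) (f y) := by
  rw [SimpleGraph.reachable_iff_reflTransGen] at hr ⊢
  exact Relation.ReflTransGen.lift' f
    (fun a b hab => (SimpleGraph.reachable_iff_reflTransGen _ _).1 (h a b hab)) _ _ hr

section BunkbedGraph

variable {G : SimpleGraph V} {T : Set V} {σ σ' : Sym2 V → Bool → Bool}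

theorem bbGraph_adj_of_adj {x y : V} {i : Bool} (hxy : G.Adj x y) (hσ : σ s(x, y) i = true) :
    (bbGraph G σ T).Adj (x, i) (y, i) :=
  Or.inl ⟨rfl, hxy, hσ⟩

theorem bbGraph_congr (h : ∀ x y, G.Adj x y → σ s(x, y) = σ' s(x, y)) :
    bbGraph G σ T = bbGraph G σ' T := by
  ext a b
  exact or_congr_left (and_congr_right fun _ => and_congr_right fun hab => by rw [h _ _ hab])

theorem bbGraph_adj_of_mem {x : V} {i j : Bool} (hx : x ∈ T) (hij : i ≠ j) :
    (bbGraph G σ T).Adj (x, i) (x, j) :=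
  Or.inr ⟨rfl, hij, hx⟩

theorem bbGraph_reachable_of_forall
    (h : ∀ x y i, G.Adj x y → σ s(x, y) i = true → (bbGraph G σ' T).Reachable (x, i) (y, i))
    {q₁ q₂ : V × Bool} (hr : (bbGraph G σ T).Reachable q₁ q₂) :
    (bbGraph G σ' T).Reachable q₁ q₂ := by
  refine reachable_map_of_adj id ?_ hr
  rintro ⟨x, i⟩ ⟨y, j⟩ (⟨rfl, hxy, hσ⟩ | ⟨rfl, hij, hx⟩)
  · exact h x y i hxy hσ
  · exact (bbGraph_adj_of_mem hx hij).reachable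

theorem bbGraph_update_reachable_of_forall [DecidableEq V] {x₀ y₀ : V} {a a' : Bool → Bool}
    (h : ∀ i, a i = true →
      (bbGraph G (Function.update σ s(x₀, y₀) a') T).Reachable (x₀, i) (y₀, i))
    {q₁ q₂ : V × Bool} (hr : (bbGraph G (Function.update σ s(x₀, y₀) a) T).Reachable q₁ q₂) :
    (bbGraph G (Function.update σ s(x₀, y₀) a') T).Reachable q₁ q₂ := by
  refine bbGraph_reachable_of_forall (fun x y i hxy hσ => ?_) hr
  by_cases he : s(x, y) = s(x₀, y₀)
  · rw [he, Function.update_self] at hσ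
    rcases Sym2.eq_iff.1 he with ⟨rfl, rfl⟩ | ⟨rfl, rfl⟩
    exacts [h i hσ, (h i hσ).symm]
  · rw [Function.update_of_ne he] at hσ
    exact (bbGraph_adj_of_adj hxy (by rwa [Function.update_of_ne he])).reachable

theorem bbGraph_update_reachable_of_le [DecidableEq V] {x₀ y₀ : V} (hxy₀ : G.Adj x₀ y₀)
    {a a' : Bool → Bool} (hle : ∀ i, a i = true → a' i = true) {q₁ q₂ : V × Bool}
    (hr : (bbGraph G (Function.update σ s(x₀, y₀) a) T).Reachable q₁ q₂) :
    (bbGraph G (Function.update σ s(x₀, y₀) a') T).Reachable q₁ q₂ :=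
  bbGraph_update_reachable_of_forall (fun i hi =>
    (bbGraph_adj_of_adj hxy₀ (by rw [Function.update_self]; exact hle i hi)).reachable) hr

end BunkbedGraph

def statusGraph (G : SimpleGraph V) (t : Sym2 V → Status) (s : Status) : SimpleGraph V :=
  G.deleteEdges {e | t e ≠ s}

@[simp]
theorem statusGraph_adj {G : SimpleGraph V} {t : Sym2 V → Status} {s : Status} {x y : V} :
    (statusGraph G t s).Adj x y ↔ G.Adj x y ∧ t s(x, y) = s := by
  simp [statusGraph]

def BothPresent (t : Sym2 V → Status) (σ : Sym2 V → Bool → Bool) : Prop :=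
  ∀ e, t e = .both → σ e = fun _ => true

theorem BothPresent.update [DecidableEq V] {t : Sym2 V → Status} {σ : Sym2 V → Bool → Bool}
    (hσ : BothPresent t σ) {e : Sym2 V} (he : t e ≠ .both) (a : Bool → Bool) :
    BothPresent t (Function.update σ e a) := fun e' he' => by
  rw [Function.update_of_ne fun h : e' = e => he (h ▸ he')]
  exact hσ e' he'

theorem BothPresent.reachable {G : SimpleGraph V} {T : Set V} {t : Sym2 V → Status}
    {σ : Sym2 V → Bool → Bool} (hσ : BothPresent t σ) {x y : V}
    (hr : (statusGraph G t .both).Reachable x y) (i : Bool) :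
    (bbGraph G σ T).Reachable (x, i) (y, i) :=
  reachable_map_of_adj (·, i) (fun _ _ hab => (bbGraph_adj_of_adj (statusGraph_adj.1 hab).1
    (by rw [hσ _ (statusGraph_adj.1 hab).2])).reachable) hr

theorem bothPresent_of_law_ne_zero {t : Sym2 V → Status} {σ : Sym2 V → Bool → Bool}
    {p : Sym2 V → ℝ} (hσ : ∀ e, (t e).law (p e) (σ e) ≠ 0) : BothPresent t σ := fun e he => by
  obtain ⟨b, hb⟩ := Status.eq_pick_of_law_ne_zero (he ▸ by decide) (hσ e)
  rw [← hb, he]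
  rfl

theorem BothPresent.reachable_of_parallel {G : SimpleGraph V} {T : Set V} {t : Sym2 V → Status}
    {σ : Sym2 V → Bool → Bool} (hσ : BothPresent t σ) {x₀ y₀ x₁ y₁ : V} (hxy₁ : G.Adj x₁ y₁)
    (hx : (statusGraph G t .both).Reachable x₀ x₁) (hy : (statusGraph G t .both).Reachable y₀ y₁)
    {i : Bool} (hi : σ s(x₁, y₁) i = true) : (bbGraph G σ T).Reachable (x₀, i) (y₀, i) :=
  ((hσ.reachable hx i).trans (bbGraph_adj_of_adj hxy₁ hi).reachable).trans (hσ.reachable hy.symm i)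

structure IsParallel (G : SimpleGraph V) (t : Sym2 V → Status) (x₀ y₀ x₁ y₁ : V) : Prop where
  adj₀ : (statusGraph G t .one).Adj x₀ y₀
  adj₁ : (statusGraph G t .one).Adj x₁ y₁
  reachable_fst : (statusGraph G t .both).Reachable x₀ x₁
  reachable_snd : (statusGraph G t .both).Reachable y₀ y₁
  ne : s(x₀, y₀) ≠ s(x₁, y₁)

namespace IsParallel

variable [DecidableEq V] {G : SimpleGraph V} {T : Set V} {t : Sym2 V → Status}
  {σ : Sym2 V → Bool → Bool} {x₀ y₀ x₁ y₁ : V}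

theorem bothPresent_update (h : IsParallel G t x₀ y₀ x₁ y₁) (hσ : BothPresent t σ)
    (a b : Bool → Bool) :
    BothPresent t (Function.update (Function.update σ s(x₁, y₁) b) s(x₀, y₀) a) :=
  (hσ.update (by rw [(statusGraph_adj.1 h.adj₁).2]; decide) b).update
    (by rw [(statusGraph_adj.1 h.adj₀).2]; decide) a

theorem update_comm (h : IsParallel G t x₀ y₀ x₁ y₁) (σ : Sym2 V → Bool → Bool)
    (a b : Bool → Bool) :
    Function.update (Function.update σ s(x₁, y₁) b) s(x₀, y₀) a =
      Function.update (Function.update σ s(x₀, y₀) a) s(x₁, y₁) b :=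
  Function.update_comm h.ne.symm _ _ σ

theorem reachable_same_iff (h : IsParallel G t x₀ y₀ x₁ y₁) (hσ : BothPresent t σ)
    (c : Bool → Bool) {q₁ q₂ : V × Bool} :
    (bbGraph G (Function.update (Function.update σ s(x₁, y₁) c) s(x₀, y₀) c) T).Reachable
        q₁ q₂ ↔
      (bbGraph G (Function.update (Function.update σ s(x₁, y₁) fun _ => false) s(x₀, y₀) c)
        T).Reachable q₁ q₂ := by
  rw [h.update_comm, h.update_comm]
  refine ⟨bbGraph_update_reachable_of_forall fun i hi => ?_,
    bbGraph_update_reachable_of_forall fun i hi => by simp at hi⟩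
  refine (h.update_comm _ _ _ ▸ h.bothPresent_update hσ c _).reachable_of_parallel
    (statusGraph_adj.1 h.adj₀).1 h.reachable_fst.symm h.reachable_snd.symm ?_
  rwa [Function.update_of_ne h.ne, Function.update_self]

theorem reachable_opposite_iff (h : IsParallel G t x₀ y₀ x₁ y₁) (hσ : BothPresent t σ)
    (c : Bool → Bool) {q₁ q₂ : V × Bool} :
    (bbGraph G (Function.update (Function.update σ s(x₁, y₁) fun i => !c i) s(x₀, y₀) c)
        T).Reachable q₁ q₂ ↔
      (bbGraph G (Function.update (Function.update σ s(x₁, y₁) fun _ => false) s(x₀, y₀)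
        fun _ => true) T).Reachable q₁ q₂ := by
  have hxy₀ := (statusGraph_adj.1 h.adj₀).1
  have hxy₁ := (statusGraph_adj.1 h.adj₁).1
  refine ⟨fun hr => ?_, fun hr => ?_⟩
  · have hr' := bbGraph_update_reachable_of_le hxy₀ (a' := fun _ => true) (fun _ _ => rfl) hr
    rw [h.update_comm] at hr' ⊢
    refine bbGraph_update_reachable_of_forall (fun i _ => ?_) hr'
    refine (h.update_comm _ _ _ ▸ h.bothPresent_update hσ _ _).reachable_of_parallel hxy₀
      h.reachable_fst.symm h.reachable_snd.symm ?_
    rw [Function.update_of_ne h.ne, Function.update_self]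
  · rw [h.update_comm] at hr
    have hr' := bbGraph_update_reachable_of_le hxy₁ (a' := fun i => !c i)
      (fun i hi => by simp at hi) hr
    rw [← h.update_comm] at hr'
    refine bbGraph_update_reachable_of_forall (fun i _ => ?_) hr'
    cases hc : c i
    · refine (h.bothPresent_update hσ _ _).reachable_of_parallel hxy₁ h.reachable_fst
        h.reachable_snd ?_
      rw [h.update_comm, Function.update_self, hc]
      rfl
    · exact (bbGraph_adj_of_adj hxy₀ (by rw [Function.update_self, hc])).reachable

end IsParallel

section Quotient

variable (G : SimpleGraph V) (t : Sym2 V → Status)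

abbrev Component : Type := (statusGraph G t .both).ConnectedComponent

abbrev toComponent (x : V) : Component G t := (statusGraph G t .both).connectedComponentMk x

def quotientGraph : SimpleGraph (Component G t) where
  Adj A B := A ≠ B ∧ ∃ x y, (statusGraph G t .one).Adj x y ∧
    toComponent G t x = A ∧ toComponent G t y = B
  symm := ⟨fun _ _ ⟨hne, x, y, hxy, hx, hy⟩ => ⟨hne.symm, y, x, hxy.symm, hy, hx⟩⟩
  loopless := ⟨fun _ h => h.1 rfl⟩

theorem quotientGraph_isMinor : IsMinor (quotientGraph G t) G := by
  refine ⟨fun A => A.supp, fun A => ?_, fun A B hAB => ?_, fun A B hAB => ?_⟩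
  · exact A.maximal_connected_induce_supp.prop.mono
      (SimpleGraph.comap_monotone _ (SimpleGraph.deleteEdges_le _))
  · exact Set.disjoint_left.2 fun x hA hB => hAB (hA.symm.trans hB)
  · obtain ⟨-, x, y, hxy, hx, hy⟩ := hAB
    exact ⟨x, hx, y, hy, (statusGraph_adj.1 hxy).1⟩

theorem toComponent_out_reachable (x : V) :
    (statusGraph G t .both).Reachable (toComponent G t x).out x :=
  SimpleGraph.ConnectedComponent.exact (Quot.out_eq _)

variable {G t}

theorem injOn_map_toComponent
    (hpar : ∀ x₀ y₀ x₁ y₁, ¬ IsParallel G t x₀ y₀ x₁ y₁) :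
    Set.InjOn (Sym2.map (toComponent G t)) (statusGraph G t .one).edgeSet := by
  intro e₀ he₀ e₁ he₁ heq
  induction e₀ using Sym2.ind with | _ x₀ y₀ => ?_
  induction e₁ using Sym2.ind with | _ x₁ y₁ => ?_
  simp only [Sym2.map_mk, Sym2.eq_iff, SimpleGraph.ConnectedComponent.eq] at heq
  by_contra hne
  rcases heq with ⟨hx, hy⟩ | ⟨hx, hy⟩
  · exact hpar _ _ _ _ ⟨he₀, he₁, hx, hy, hne⟩
  · rw [Sym2.eq_swap (a := x₁)] at hne
    exact hpar _ _ _ _ ⟨he₀, SimpleGraph.adj_symm _ he₁, hx, hy, hne⟩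

theorem reachable_pick_iff_reachable_quotient {T : Set V} (hind : ∀ e, t e ≠ .indep)
    (hloop : ∀ x y, (statusGraph G t .one).Adj x y → ¬ (statusGraph G t .both).Reachable x y)
    (c : Sym2 (Component G t) → Bool) (x y : V) (i j : Bool) :
    (bbGraph G (fun e => (t e).pick (c (e.map (toComponent G t)))) T).Reachable (x, i) (y, j) ↔
      (ccGraph (quotientGraph G t) c (toComponent G t '' T)).Reachable
        (toComponent G t x, i) (toComponent G t y, j) := by
  set σ := fun e => (t e).pick (c (e.map (toComponent G t)))
  have hσ : BothPresent t σ := fun e he => by simp only [σ, he]; rfl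
  constructor
  · refine reachable_map_of_adj (fun q : V × Bool => (toComponent G t q.1, q.2)) ?_
    rintro ⟨a, i⟩ ⟨b, j⟩ (⟨rfl, hab, hab'⟩ | ⟨rfl, hij, ha⟩)
    · dsimp only at hab hab' ⊢
      cases ht : t s(a, b) with
      | both =>
        rw [show toComponent G t a = toComponent G t b from
          SimpleGraph.ConnectedComponent.connectedComponentMk_eq_of_adj
            (statusGraph_adj.2 ⟨hab, ht⟩)]
      | neither => simp [σ, ht, Status.pick] at hab'
      | one =>
        simp only [σ, ht, Status.pick, Sym2.map_mk, beq_iff_eq] at hab'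
        refine SimpleGraph.Adj.reachable (Or.inl ⟨rfl, ⟨fun h => ?_, a, b,
          statusGraph_adj.2 ⟨hab, ht⟩, rfl, rfl⟩, hab'.symm⟩)
        exact hloop a b (statusGraph_adj.2 ⟨hab, ht⟩) (SimpleGraph.ConnectedComponent.exact h)
      | indep => exact absurd ht (hind _)
    · exact SimpleGraph.Adj.reachable (Or.inr ⟨rfl, hij, a, ha, rfl⟩)
  · intro hr
    have hout := reachable_map_of_adj (H₂ := bbGraph G σ T)
      (fun Q : Component G t × Bool => (Q.1.out, Q.2)) ?_ hr
    · exact ((hσ.reachable (toComponent_out_reachable G t x) i).symm.trans hout).trans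
        (hσ.reachable (toComponent_out_reachable G t y) j)
    rintro ⟨A, i⟩ ⟨B, j⟩ (⟨rfl, ⟨-, a, b, hab, rfl, rfl⟩, hc⟩ | ⟨rfl, hij, a, ha, rfl⟩)
    · refine ((hσ.reachable (toComponent_out_reachable G t a) i).trans
        (bbGraph_adj_of_adj (statusGraph_adj.1 hab).1 ?_).reachable).trans
        (hσ.reachable (toComponent_out_reachable G t b) i).symm
      simp [σ, (statusGraph_adj.1 hab).2, Status.pick, hc]
    · exact ((hσ.reachable (toComponent_out_reachable G t a) i).trans
        (bbGraph_adj_of_mem ha hij).reachable).trans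
        (hσ.reachable (toComponent_out_reachable G t a) j).symm

end Quotient

section MixedModel

variable [Fintype V] [DecidableEq V] (G : SimpleGraph V) (p : Sym2 V → ℝ) (T : Set V)

def mixedProb (t : Sym2 V → Status) (x y : V × Bool) : ℝ :=
  weightedSum (fun e => (t e).law (p e)) fun σ => pInd ((bbGraph G σ T).Reachable x y)

variable {G p T}

theorem weightedSum_law_update (t : Sym2 V → Status) (e : Sym2 V) (s : Status)
    (g : (Sym2 V → Bool → Bool) → ℝ) :
    weightedSum (fun e' => (Function.update t e s e').law (p e')) g =
      ∑ a, s.law (p e) a *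
        weightedSum (fun e' => (t e').law (p e')) fun σ => g (Function.update σ e a) := by
  have hupd : (fun e' => (Function.update t e s e').law (p e')) =
      Function.update (fun e' => (t e').law (p e')) e (s.law (p e)) := by
    funext e'
    by_cases he : e' = e
    · subst he; simp
    · simp [Function.update_of_ne he]
  rw [hupd, weightedSum_update (fun e' => (t e').law (p e')) e (Status.sum_law _ _)]

theorem mixedProb_of_indep {t : Sym2 V → Status} {e : Sym2 V} (he : t e = .indep)
    (x y : V × Bool) :
    mixedProb G p T t x y =
      p e ^ 2 * mixedProb G p T (Function.update t e .both) x y +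
        (1 - p e) ^ 2 * mixedProb G p T (Function.update t e .neither) x y +
        2 * p e * (1 - p e) * mixedProb G p T (Function.update t e .one) x y := by
  conv_lhs => rw [← Function.update_eq_self e t, he]
  simp only [mixedProb, weightedSum_law_update, Status.law_indep, Pi.add_apply, Pi.smul_apply,
    smul_eq_mul, add_mul, mul_assoc, Finset.sum_add_distrib, ← Finset.mul_sum]

theorem mixedProb_of_one_of_reachable {t : Sym2 V → Status} {x₀ y₀ : V}
    (ht : t s(x₀, y₀) = .one) (hr : (statusGraph G t .both).Reachable x₀ y₀) (x y : V × Bool) :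
    mixedProb G p T t x y = mixedProb G p T (Function.update t s(x₀, y₀) .neither) x y := by
  set R : (Bool → Bool) → ℝ := fun a => weightedSum (fun e => (t e).law (p e))
    fun σ => pInd ((bbGraph G (Function.update σ s(x₀, y₀) a) T).Reachable x y)
  have hR : ∀ a, R a = R fun _ => false := fun a =>
    weightedSum_congr fun σ hσ => by
      have hB : BothPresent t (Function.update σ s(x₀, y₀) fun _ => false) :=
        (bothPresent_of_law_ne_zero hσ).update (by rw [ht]; decide) _
      exact congrArg pInd (propext ⟨bbGraph_update_reachable_of_forall fun i _ =>
        hB.reachable hr i, bbGraph_update_reachable_of_forall fun i hi => by simp at hi⟩)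
  have hsum : ∀ s, mixedProb G p T (Function.update t s(x₀, y₀) s) x y = R fun _ => false := by
    intro s
    rw [mixedProb, weightedSum_law_update]
    calc ∑ a, s.law (p s(x₀, y₀)) a * R a
        = ∑ a, s.law (p s(x₀, y₀)) a * R fun _ => false :=
          Finset.sum_congr rfl fun a _ => by rw [hR a]
      _ = R fun _ => false := by rw [← Finset.sum_mul, Status.sum_law, one_mul]
  rw [hsum, ← hsum (t s(x₀, y₀)), Function.update_eq_self]

theorem mixedProb_of_parallel {t : Sym2 V → Status} {x₀ y₀ x₁ y₁ : V}
    (h : IsParallel G t x₀ y₀ x₁ y₁) (x y : V × Bool) :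
    mixedProb G p T t x y =
      (mixedProb G p T (Function.update t s(x₁, y₁) .neither) x y +
        mixedProb G p T
          (Function.update (Function.update t s(x₁, y₁) .neither) s(x₀, y₀) .both) x y) / 2 := by
  set e₀ := s(x₀, y₀)
  set e₁ := s(x₁, y₁)
  set K : (Bool → Bool) → (Bool → Bool) → ℝ := fun a b =>
    weightedSum (fun e => (t e).law (p e)) fun σ =>
      pInd ((bbGraph G (Function.update (Function.update σ e₁ b) e₀ a) T).Reachable x y)
  have hsplit : ∀ s₀ s₁ : Status,
      mixedProb G p T (Function.update (Function.update t e₁ s₁) e₀ s₀) x y =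
        ∑ a, s₀.law (p e₀) a * ∑ b, s₁.law (p e₁) b * K a b := by
    intro s₀ s₁
    simp only [mixedProb, weightedSum_law_update]
    rfl
  -- Two parallel copies in the same layer make one of them redundant; in opposite layers
  -- they join the ends of both edges in both layers, like a doubled edge.
  have hsame : ∀ c, K c c = K c fun _ => false := fun c => weightedSum_congr fun σ hσ =>
    congrArg pInd (propext (h.reachable_same_iff (bothPresent_of_law_ne_zero hσ) c))
  have hopp : ∀ b, K (Status.one.pick b) (Status.one.pick (!b)) =
      K (fun _ => true) fun _ => false := fun b => by
    have hflip : Status.one.pick (!b) = fun i => !Status.one.pick b i := by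
      funext i; cases i <;> cases b <;> rfl
    rw [hflip]
    exact weightedSum_congr fun σ hσ =>
      congrArg pInd (propext (h.reachable_opposite_iff (bothPresent_of_law_ne_zero hσ) _))
  have ht₀ := (statusGraph_adj.1 h.adj₀).2
  have ht₁ := (statusGraph_adj.1 h.adj₁).2
  conv_lhs => rw [← Function.update_eq_self e₁ t, ht₁, ← Function.update_eq_self e₀
    (Function.update t e₁ .one), Function.update_of_ne h.ne, ht₀]
  rw [hsplit, hsplit, ← Function.update_eq_self e₀ (Function.update t e₁ .neither),
    Function.update_of_ne h.ne, ht₀, hsplit]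
  have hopp₀ := hopp false
  have hopp₁ := hopp true
  simp only [Status.sum_law_mul (show Status.one ≠ .indep by decide),
    Status.sum_law_mul (show Status.neither ≠ .indep by decide),
    Status.sum_law_mul (show Status.both ≠ .indep by decide), hsame]
  simp only [Bool.not_false, Bool.not_true, Status.pick] at hopp₀ hopp₁ ⊢
  linarith

theorem mixedProb_eq_PE3 {t : Sym2 V → Status} (hind : ∀ e, t e ≠ .indep)
    (hloop : ∀ x y, (statusGraph G t .one).Adj x y → ¬ (statusGraph G t .both).Reachable x y)
    (hpar : ∀ x₀ y₀ x₁ y₁, ¬ IsParallel G t x₀ y₀ x₁ y₁)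
    (x y : V) (i j : Bool) :
    mixedProb G p T t (x, i) (y, j) =
      PE3 (quotientGraph G t) (toComponent G t '' T) (toComponent G t x, i)
        (toComponent G t y, j) := by
  set E := (statusGraph G t .one).edgeSet
  set conn : (Sym2 V → Bool) → ℝ := fun β =>
    pInd ((bbGraph G (fun e => (t e).pick (β e)) T).Reachable (x, i) (y, j))
  set F : (E → Bool) → ℝ := fun b => conn (Function.extend Subtype.val b fun _ => false)
  have hF : ∀ β, conn β = F (β ∘ Subtype.val) := fun β => by
    refine congrArg (fun H : SimpleGraph (V × Bool) => pInd (H.Reachable (x, i) (y, j)))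
      (bbGraph_congr fun u w huw => ?_)
    cases ht : t s(u, w) with
    | both | neither => rfl
    | one =>
      have he : s(u, w) ∈ E := statusGraph_adj.2 ⟨huw, ht⟩
      simp only [Subtype.val_injective.extend_apply _ _ ⟨_, he⟩, Function.comp_apply]
    | indep => exact absurd ht (hind _)
  set quotientEdge : E → Sym2 (Component G t) := fun e => e.1.map (toComponent G t)
  have hinj : Function.Injective quotientEdge := fun e₀ e₁ h =>
    Subtype.ext (injOn_map_toComponent hpar e₀.2 e₁.2 h)
  calc mixedProb G p T t (x, i) (y, j)
      = (1 / 2) ^ Fintype.card (Sym2 V) * ∑ β, conn β := by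
        rw [mixedProb, funext fun e => Status.law_of_ne_indep (hind e) (p e), weightedSum_lawMap,
          weightedSum_const]
    _ = (∑ β : Sym2 V → Bool, F (β ∘ Subtype.val)) / 2 ^ Fintype.card (Sym2 V) := by
        simp_rw [hF, one_div, inv_pow]
        ring
    _ = (∑ b, F b) / 2 ^ Fintype.card E := by
        simpa using sum_comp_injective Subtype.val_injective F
    _ = (∑ c : Sym2 (Component G t) → Bool, F (c ∘ quotientEdge)) /
          2 ^ Fintype.card (Sym2 (Component G t)) := by
        simpa using (sum_comp_injective hinj F).symm
    _ = _ := by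
        unfold PE3
        congr 1
        refine Finset.sum_congr rfl fun c _ => ?_
        rw [← reachable_pick_iff_reachable_quotient hind hloop]
        exact (hF (c ∘ Sym2.map (toComponent G t))).symm

def potential (t : Sym2 V → Status) : ℕ := ∑ e, (t e).cost

theorem potential_update_lt {t : Sym2 V → Status} {e : Sym2 V} {s : Status}
    (h : s.cost < (t e).cost) : potential (Function.update t e s) < potential t := by
  refine Finset.sum_lt_sum (fun e' _ => ?_) ⟨e, Finset.mem_univ _, by rwa [Function.update_self]⟩
  by_cases he : e' = e
  · subst he; rw [Function.update_self]; exact h.le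
  · rw [Function.update_of_ne he]

theorem mixedProb_bunkbed (hp : ∀ e, 0 ≤ p e ∧ p e ≤ 1)
    (hE3 : ∀ (t : Sym2 V → Status) (T' : Set (Component G t)) (u v : Component G t),
      PE3 (quotientGraph G t) T' (u, false) (v, true) ≤
        PE3 (quotientGraph G t) T' (u, false) (v, false))
    (u v : V) (t : Sym2 V → Status) :
    mixedProb G p T t (u, false) (v, true) ≤ mixedProb G p T t (u, false) (v, false) := by
  by_cases hind : ∃ e, t e = .indep
  · obtain ⟨e, he⟩ := hind
    have hB := mixedProb_bunkbed hp hE3 u v (Function.update t e .both)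
    have hN := mixedProb_bunkbed hp hE3 u v (Function.update t e .neither)
    have hO := mixedProb_bunkbed hp hE3 u v (Function.update t e .one)
    rw [mixedProb_of_indep he, mixedProb_of_indep he]
    have hcoef : 0 ≤ 2 * p e * (1 - p e) := by nlinarith [hp e]
    gcongr
  by_cases hloop : ∃ x y, (statusGraph G t .one).Adj x y ∧ (statusGraph G t .both).Reachable x y
  · obtain ⟨x, y, hxy, hr⟩ := hloop
    rw [mixedProb_of_one_of_reachable (statusGraph_adj.1 hxy).2 hr,
      mixedProb_of_one_of_reachable (statusGraph_adj.1 hxy).2 hr]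
    exact mixedProb_bunkbed hp hE3 u v _
  by_cases hpar : ∃ x₀ y₀ x₁ y₁, IsParallel G t x₀ y₀ x₁ y₁
  · obtain ⟨x₀, y₀, x₁, y₁, hpar⟩ := hpar
    rw [mixedProb_of_parallel hpar, mixedProb_of_parallel hpar]
    have h₁ := mixedProb_bunkbed hp hE3 u v (Function.update t s(x₁, y₁) .neither)
    have h₂ := mixedProb_bunkbed hp hE3 u v
      (Function.update (Function.update t s(x₁, y₁) .neither) s(x₀, y₀) .both)
    linarith
  push Not at hind hloop hpar
  rw [mixedProb_eq_PE3 hind hloop hpar, mixedProb_eq_PE3 hind hloop hpar]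
  exact hE3 t _ _ _
termination_by potential t
decreasing_by
  all_goals first
    | exact potential_update_lt (by rw [he]; decide)
    | exact potential_update_lt (by rw [(statusGraph_adj.1 hxy).2]; decide)
    | exact potential_update_lt (by rw [(statusGraph_adj.1 hpar.adj₁).2]; decide)
    | exact (potential_update_lt (by
          rw [Function.update_of_ne hpar.ne, (statusGraph_adj.1 hpar.adj₀).2]; decide)).trans
        (potential_update_lt (by rw [(statusGraph_adj.1 hpar.adj₁).2]; decide))

end MixedModel

section Models

variable [Fintype V] [DecidableEq V] (G : SimpleGraph V)

theorem PE2_eq_mixedProb (p : Sym2 V → ℝ) (T : Set V) (x y : V × Bool) :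
    PE2 G p T x y =
      mixedProb G (fun e => if e ∈ G.edgeSet then p e else 1 / 2) T (fun _ => .indep) x y := by
  refine Finset.sum_congr rfl fun σ _ => congrArg (· * _) (Finset.prod_congr rfl fun e _ => ?_)
  by_cases he : e ∈ G.edgeSet
  · simp [he, Status.law, Status.bern]
  · simp only [he, if_false, Status.law, Status.bern]
    norm_num

theorem PE1_eq_sum (p : ℝ) (x y : V × Bool) :
    PE1 G p x y = ∑ η : V → Bool,
      (∏ w, Status.bern p (η w)) * PE2 G (fun _ => p) {w | η w = true} x y := by
  simp only [PE1, PE2, Finset.mul_sum]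
  rw [Finset.sum_comm]
  refine Finset.sum_congr rfl fun η _ => Finset.sum_congr rfl fun σ _ => ?_
  simp only [Status.bern]
  ring

variable {G}

theorem PE2_bunkbed
    (hE3 : ∀ (t : Sym2 V → Status) (T' : Set (Component G t)) (u v : Component G t),
      PE3 (quotientGraph G t) T' (u, false) (v, true) ≤
        PE3 (quotientGraph G t) T' (u, false) (v, false))
    {p : Sym2 V → ℝ} (hp : ∀ e, 0 ≤ p e ∧ p e ≤ 1) (T : Set V) (u v : V) :
    PE2 G p T (u, false) (v, true) ≤ PE2 G p T (u, false) (v, false) := by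
  simp only [PE2_eq_mixedProb]
  refine mixedProb_bunkbed (fun e => ?_) hE3 u v _
  split_ifs
  exacts [hp e, by norm_num]

theorem PE1_bunkbed {p : ℝ} (hp₀ : 0 ≤ p) (hp₁ : p ≤ 1)
    (hE2 : ∀ (T : Set V) (u v : V),
      PE2 G (fun _ => p) T (u, false) (v, true) ≤ PE2 G (fun _ => p) T (u, false) (v, false))
    (u v : V) : PE1 G p (u, false) (v, true) ≤ PE1 G p (u, false) (v, false) := by
  rw [PE1_eq_sum, PE1_eq_sum]
  gcongr with η
  · exact Finset.prod_nonneg fun w _ => by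
      unfold Status.bern; split_ifs <;> linarith
  · exact hE2 _ u v

end Models

end Bunkbed

theorem bunkbed_E3_minors_implies_E2_and_E1_general [Fintype V] [DecidableEq V]
    (G : SimpleGraph V)
    (h : ∀ (W : Type) (_ : Fintype W) (_ : DecidableEq W) (G' : SimpleGraph W),
      IsMinor G' G → ∀ (T' : Set W) (u v : W),
        PE3 G' T' (u, false) (v, false) ≥ PE3 G' T' (u, false) (v, true)) :
    (∀ (p : Sym2 V → ℝ), (∀ e, 0 ≤ p e ∧ p e ≤ 1) → ∀ (T : Set V) (u v : V),
      PE2 G p T (u, false) (v, false) ≥ PE2 G p T (u, false) (v, true)) ∧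
    (∀ p : ℝ, 0 ≤ p → p ≤ 1 → ∀ u v : V,
      PE1 G p (u, false) (v, false) ≥ PE1 G p (u, false) (v, true)) := by
  have hE2 := fun (p : Sym2 V → ℝ) (hp : ∀ e, 0 ≤ p e ∧ p e ≤ 1) =>
    Bunkbed.PE2_bunkbed (fun t => h _ _ _ _ (Bunkbed.quotientGraph_isMinor G t)) hp
  exact ⟨hE2, fun p hp₀ hp₁ => Bunkbed.PE1_bunkbed hp₀ hp₁ (hE2 _ fun _ => ⟨hp₀, hp₁⟩)⟩

/-- If the bunkbed inequality in model E₃ holds for every minor of `G` (and every set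
of transversal vertices), then the bunkbed inequality in model E₂ holds for `G` for
every probability vector and every `T`, and the bunkbed inequality in model E₁ holds
for `G` for every `p ∈ [0,1]`. -/
theorem bunkbed_E3_minors_implies_E2_and_E1 [Fintype V] [DecidableEq V]
    (G : SimpleGraph V) (hconn : G.Connected)
    (h : ∀ (W : Type) (_ : Fintype W) (_ : DecidableEq W) (G' : SimpleGraph W),
      IsMinor G' G → ∀ (T' : Set W) (u v : W),
        PE3 G' T' (u, false) (v, false) ≥ PE3 G' T' (u, false) (v, true)) :
    (∀ (p : Sym2 V → ℝ), (∀ e, 0 ≤ p e ∧ p e ≤ 1) → ∀ (T : Set V) (u v : V),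
      PE2 G p T (u, false) (v, false) ≥ PE2 G p T (u, false) (v, true)) ∧
    (∀ p : ℝ, 0 ≤ p → p ≤ 1 → ∀ u v : V,
      PE1 G p (u, false) (v, false) ≥ PE1 G p (u, false) (v, true)) :=
  bunkbed_E3_minors_implies_E2_and_E1_general G h
end
end

section
/- Let G be a finite graph and T ⊆ V(G). Orient each edge of G independently and uniformly at random. A 'walk' starts at u following edge directions (or against them, if u ∈ T) and may switch between traveling with and against the edge directions only at vertices of T; edges may be reused. Then for all u, v ∈ V(G), the probability that some such walk from u (started forward) arrives at v moving with the direction of its last edge is at least the probability that some such walk arrives at v moving against the direction of its last edge (with either mode allowed at v if v ∈ T). -/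
/-!
Call a vertex doubly reached if walks from `u` arrive at it in both modes. When some walk from
`u` meets `T`, retracing it shows that `u` itself is reached in reverse mode. Reverse every edge
except those joining two doubly reached vertices or two unreached vertices. A step along a reversed
edge, taken in the opposite mode, is a step of the original orientation, and the retained edges are
exactly what walks between doubly reached vertices need; so the new orientation reaches precisely
the mirror images `(x, !m)` of the states `(x, m)` reached before. In particular it is an
involution, and it carries reverse arrivals at `v` to forward arrivals. Orientations in which no
walk meets `T` admit no reverse arrival at all, since the mode can only switch at `T`.
-/

open scoped Classical

noncomputable section

variable {V : Type}

/-- Given an orientation `d` of the edges (the edge `e` points from `e.out.1` to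
`e.out.2` when `d e = true`, and the other way when `d e = false`), `dirStep G d a b`
says that there is an edge of `G` directed from `a` to `b`. -/
def dirStep (G : SimpleGraph V) (d : Sym2 V → Bool) (a b : V) : Prop :=
  G.Adj a b ∧ ((s(a, b)).out = (a, b) ∧ d s(a, b) = true ∨
    (s(a, b)).out = (b, a) ∧ d s(a, b) = false)

/-- One step of a walk in model D₂^T on the state space `V × Bool`: the second
component records whether the last edge was traversed with (`true`) or against
(`false`) its orientation. The traversal mode may change only at vertices of `T`. -/
def d2Step (G : SimpleGraph V) (d : Sym2 V → Bool) (T : Set V) :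
    V × Bool → V × Bool → Prop := fun a b =>
  (b.2 = a.2 ∨ a.1 ∈ T) ∧
    ((b.2 = true ∧ dirStep G d a.1 b.1) ∨ (b.2 = false ∧ dirStep G d b.1 a.1))

/-- There is a legal walk in model D₂^T from `u` (started in forward mode) arriving at
`v` with the last edge traversed forward (with either arrival mode acceptable when
`v ∈ T`). -/
def d2ArriveFwd (G : SimpleGraph V) (d : Sym2 V → Bool) (T : Set V) (u v : V) : Prop :=
  ∃ m : Bool, Relation.ReflTransGen (d2Step G d T) (u, true) (v, m) ∧ (m = true ∨ v ∈ T)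

/-- There is a legal walk in model D₂^T from `u` (started in forward mode) arriving at
`v` with the last edge traversed against its orientation (either arrival mode
acceptable when `v ∈ T`). -/
def d2ArriveRev (G : SimpleGraph V) (d : Sym2 V → Bool) (T : Set V) (u v : V) : Prop :=
  ∃ m : Bool, Relation.ReflTransGen (d2Step G d T) (u, true) (v, m) ∧ (m = false ∨ v ∈ T)

lemma pInd_mono {P Q : Prop} (h : P → Q) : pInd P ≤ pInd Q := by
  unfold pInd
  split_ifs with hP hQ hQ
  exacts [le_rfl, absurd (h hP) hQ, zero_le_one, le_rfl]

lemma sum_pInd_le_of_imp_perm {α : Type*} [Fintype α] {P Q : α → Prop} (σ : Equiv.Perm α)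
    (h : ∀ a, P a → Q (σ a)) : ∑ a, pInd (P a) ≤ ∑ a, pInd (Q a) :=
  calc ∑ a, pInd (P a) ≤ ∑ a, pInd (Q (σ a)) := Finset.sum_le_sum fun a _ => pInd_mono (h a)
    _ = ∑ a, pInd (Q a) := Equiv.sum_comp σ fun a => pInd (Q a)

section Steps

variable {G : SimpleGraph V} {T : Set V} {d d' : Sym2 V → Bool}

lemma dirStep_congr {a b : V} (h : d' s(a, b) = d s(a, b)) :
    dirStep G d' a b ↔ dirStep G d a b := by
  rw [dirStep, dirStep, h]

lemma dirStep_flip {a b : V} (h : d' s(a, b) = !d s(a, b)) :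
    dirStep G d' a b ↔ dirStep G d b a := by
  rw [dirStep, dirStep, Sym2.eq_swap (a := b), h, G.adj_comm]
  cases d s(a, b) <;> simp [or_comm]

lemma d2Step_congr {z y : V} {m n : Bool} (h : d' s(z, y) = d s(z, y)) :
    d2Step G d' T (z, m) (y, n) ↔ d2Step G d T (z, m) (y, n) := by
  have h' : d' s(y, z) = d s(y, z) := by rwa [Sym2.eq_swap]
  simp only [d2Step, dirStep_congr h, dirStep_congr h']

lemma d2Step_flip {z y : V} {m n : Bool} (h : d' s(z, y) = !d s(z, y)) :
    d2Step G d' T (z, m) (y, n) ↔ d2Step G d T (z, !m) (y, !n) := by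
  have h' : d' s(y, z) = !d s(y, z) := by rwa [Sym2.eq_swap]
  simp only [d2Step, dirStep_flip h, dirStep_flip h', Bool.not_inj_iff]
  cases n <;> simp [or_comm]

lemma d2Step.of_mode {a : V} {m m' : Bool} {b : V × Bool} (h : d2Step G d T (a, m) b)
    (hm : m = m' ∨ a ∈ T) : d2Step G d T (a, m') b :=
  ⟨by rcases hm with rfl | ha; exacts [h.1, Or.inr ha], h.2⟩

lemma d2Step.reverse {z y : V} {m n s : Bool} (h : d2Step G d T (z, m) (y, n))
    (hs : s = !n ∨ y ∈ T) : d2Step G d T (y, s) (z, !n) := by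
  refine ⟨hs.imp_left Eq.symm, ?_⟩
  rcases h.2 with ⟨rfl, h⟩ | ⟨rfl, h⟩
  exacts [Or.inr ⟨rfl, h⟩, Or.inl ⟨rfl, h⟩]

end Steps

def d2Reach (G : SimpleGraph V) (d : Sym2 V → Bool) (T : Set V) (u : V) (p : V × Bool) : Prop :=
  Relation.ReflTransGen (d2Step G d T) (u, true) p

/-- `d2ArriveFwd` and `d2ArriveRev` are the cases `m = true` and `m = false`. -/
def d2Arrives (G : SimpleGraph V) (d : Sym2 V → Bool) (T : Set V) (u v : V) (m : Bool) : Prop :=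
  ∃ m', d2Reach G d T u (v, m') ∧ (m' = m ∨ v ∈ T)

section Arrives

variable {G : SimpleGraph V} {T : Set V} {u : V} {d : Sym2 V → Bool}

lemma d2Arrives.of_reach {v : V} {m : Bool} (h : d2Reach G d T u (v, m)) :
    d2Arrives G d T u v m :=
  ⟨m, h, Or.inl rfl⟩

lemma d2Arrives.of_mode {v : V} {m m' : Bool} (h : d2Arrives G d T u v m)
    (hm : m = m' ∨ v ∈ T) : d2Arrives G d T u v m' := by
  obtain ⟨k, hk, hkm⟩ := h
  refine ⟨k, hk, ?_⟩
  rcases hm with rfl | hv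
  exacts [hkm, Or.inr hv]

lemma d2Arrives.step {z y : V} {m n : Bool} (h : d2Arrives G d T u z m)
    (hs : d2Step G d T (z, m) (y, n)) : d2Arrives G d T u y n := by
  obtain ⟨k, hk, hkm⟩ := h
  exact .of_reach (hk.tail (hs.of_mode (hkm.imp_left Eq.symm)))

lemma d2Arrives.of_step_mirror {z y : V} {m n : Bool} (hs : d2Step G d T (z, m) (y, n))
    (h : d2Arrives G d T u y (!n)) : d2Arrives G d T u z (!m) := by
  obtain ⟨k, hk, hkn⟩ := h
  have hz : d2Arrives G d T u z (!n) := .of_reach (hk.tail (hs.reverse hkn))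
  exact hz.of_mode (hs.1.imp_left (congrArg (!·)))

/-- Retrace the walk backwards from a state whose mirror image is also reached; a walk that
arrives in reverse mode has switched mode at a vertex of `T`, where both modes are reached. -/
lemma d2Arrives_start_false_of_reach {p : V × Bool} (hp : d2Reach G d T u p)
    (h : d2Arrives G d T u p.1 (!p.2) ∨ p.2 = false) : d2Arrives G d T u u false := by
  induction hp with
  | refl => simpa using h
  | @tail r q hr hs ih =>
    obtain ⟨z, m⟩ := r
    obtain ⟨y, n⟩ := q
    apply ih
    rcases h with h | rfl
    · exact Or.inl (h.of_step_mirror hs)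
    · cases m
      · exact Or.inr rfl
      · exact Or.inl ((d2Arrives.of_reach hr).of_mode (Or.inr (hs.1.resolve_left nofun)))

lemma d2Arrives.start_false {v : V} (h : d2Arrives G d T u v false) :
    d2Arrives G d T u u false := by
  obtain ⟨m, hm, rfl | hv⟩ := h
  · exact d2Arrives_start_false_of_reach hm (Or.inr rfl)
  · exact d2Arrives_start_false_of_reach hm
      (Or.inl ((d2Arrives.of_reach hm).of_mode (Or.inr hv)))

end Arrives

section Mirror

variable (G : SimpleGraph V) (T : Set V) (u : V)

def d2ArrivesBoth (d : Sym2 V → Bool) (x : V) : Prop := ∀ m, d2Arrives G d T u x m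

def d2ArrivesSome (d : Sym2 V → Bool) (x : V) : Prop := ∃ m, d2Arrives G d T u x m

def IsKeptEdge (d : Sym2 V → Bool) (e : Sym2 V) : Prop :=
  (∀ x ∈ e, d2ArrivesBoth G T u d x) ∨ (∀ x ∈ e, ¬ d2ArrivesSome G T u d x)

/-- The paper's involution on orientations admitting a walk from `u` to `T`. -/
def mirrorOrient (d : Sym2 V → Bool) : Sym2 V → Bool :=
  fun e => if IsKeptEdge G T u d e then d e else !d e

variable {G T u} {d : Sym2 V → Bool}

lemma d2ArrivesBoth.of_arrives {x : V} {m : Bool} (h : d2Arrives G d T u x m)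
    (h' : d2Arrives G d T u x (!m)) : d2ArrivesBoth G T u d x := by
  intro k
  cases k <;> cases m <;> assumption

lemma IsKeptEdge.both_right {z y : V} (hk : IsKeptEdge G T u d s(z, y))
    (hz : d2ArrivesSome G T u d z) : d2ArrivesBoth G T u d y :=
  hk.elim (fun h => h y (Sym2.mem_mk_right z y)) fun h => absurd hz (h z (Sym2.mem_mk_left z y))

lemma mirrorOrient_of_kept {e : Sym2 V} (h : IsKeptEdge G T u d e) :
    mirrorOrient G T u d e = d e :=
  if_pos h

lemma mirrorOrient_of_not_kept {e : Sym2 V} (h : ¬ IsKeptEdge G T u d e) :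
    mirrorOrient G T u d e = !d e :=
  if_neg h

/-- Retracing the walk shows that every vertex on it is reached in both modes. -/
lemma d2Reach_mirrorOrient {p : V × Bool} (hp : d2Reach G d T u p)
    (h : d2Arrives G d T u p.1 (!p.2)) : d2Reach G (mirrorOrient G T u d) T u p := by
  induction hp with
  | refl => exact .refl
  | @tail r q hr hs ih =>
    obtain ⟨z, m⟩ := r
    obtain ⟨y, n⟩ := q
    have hz : d2Arrives G d T u z (!m) := h.of_step_mirror hs
    have hk : IsKeptEdge G T u d s(z, y) := .inl fun x hx => by
      rcases Sym2.mem_iff.mp hx with rfl | rfl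
      exacts [.of_arrives (.of_reach hr) hz, .of_arrives (.of_reach (hr.tail hs)) h]
    exact (ih hz).tail ((d2Step_congr (mirrorOrient_of_kept hk)).mpr hs)

lemma d2ArrivesBoth.mirrorOrient {x : V} (h : d2ArrivesBoth G T u d x) :
    d2ArrivesBoth G T u (mirrorOrient G T u d) x := by
  intro m
  obtain ⟨k, hk, hkm⟩ := h m
  exact (d2Arrives.of_reach (d2Reach_mirrorOrient hk (h !k))).of_mode hkm

lemma d2Arrives_of_reach_mirrorOrient (hu : d2Arrives G d T u u false) {p : V × Bool}
    (hp : d2Reach G (mirrorOrient G T u d) T u p) : d2Arrives G d T u p.1 (!p.2) := by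
  induction hp with
  | refl => exact hu
  | @tail r q _ hs ih =>
    obtain ⟨z, m⟩ := r
    obtain ⟨y, n⟩ := q
    by_cases hk : IsKeptEdge G T u d s(z, y)
    · exact hk.both_right ⟨_, ih⟩ _
    · exact ih.step ((d2Step_flip (mirrorOrient_of_not_kept hk)).mp hs)

lemma d2Arrives_mirrorOrient_of_reach (hu : d2Arrives G d T u u false) {p : V × Bool}
    (hp : d2Reach G d T u p) : d2Arrives G (mirrorOrient G T u d) T u p.1 (!p.2) := by
  induction hp with
  | refl => exact (d2ArrivesBoth.of_arrives (.of_reach .refl) hu).mirrorOrient false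
  | @tail r q hr hs ih =>
    obtain ⟨z, m⟩ := r
    obtain ⟨y, n⟩ := q
    by_cases hk : IsKeptEdge G T u d s(z, y)
    · exact (hk.both_right ⟨_, .of_reach hr⟩).mirrorOrient _
    · exact ih.step ((d2Step_flip (mirrorOrient_of_not_kept hk)).mpr (by simpa using hs))

lemma d2Arrives_mirrorOrient_iff (hu : d2Arrives G d T u u false) {x : V} {m : Bool} :
    d2Arrives G (mirrorOrient G T u d) T u x m ↔ d2Arrives G d T u x (!m) := by
  constructor
  · rintro ⟨k, hk, hkm⟩
    exact (d2Arrives_of_reach_mirrorOrient hu hk).of_mode (hkm.imp_left (congrArg (!·)))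
  · rintro ⟨k, hk, hkm⟩
    exact (d2Arrives_mirrorOrient_of_reach hu hk).of_mode (by simpa using hkm)

lemma mirrorOrient_mirrorOrient (hu : d2Arrives G d T u u false) :
    mirrorOrient G T u (mirrorOrient G T u d) = d := by
  have hkept : ∀ e, IsKeptEdge G T u (mirrorOrient G T u d) e ↔ IsKeptEdge G T u d e := by
    simp only [IsKeptEdge, d2ArrivesBoth, d2ArrivesSome, d2Arrives_mirrorOrient_iff hu,
      Bool.forall_bool, Bool.exists_bool, Bool.not_false, Bool.not_true, and_comm, or_comm,
      implies_true]
  funext e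
  by_cases hk : IsKeptEdge G T u d e
  · rw [mirrorOrient_of_kept ((hkept e).mpr hk), mirrorOrient_of_kept hk]
  · rw [mirrorOrient_of_not_kept (mt (hkept e).mp hk), mirrorOrient_of_not_kept hk, Bool.not_not]

variable (G T u)

/-- `u` is reached in reverse mode exactly when some walk from `u` meets `T`. -/
def mirrorOrientOn (d : Sym2 V → Bool) : Sym2 V → Bool :=
  if d2Arrives G d T u u false then mirrorOrient G T u d else d

lemma mirrorOrientOn_involutive : Function.Involutive (mirrorOrientOn G T u) := by
  intro d
  by_cases hu : d2Arrives G d T u u false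
  · have hu' : d2Arrives G (mirrorOrient G T u d) T u u false :=
      (d2Arrives_mirrorOrient_iff hu).mpr (.of_reach .refl)
    simp only [mirrorOrientOn, if_pos hu, if_pos hu', mirrorOrient_mirrorOrient hu]
  · simp only [mirrorOrientOn, if_neg hu]

variable {G T u}

lemma d2ArriveRev.fwd_mirrorOrientOn {v : V} (h : d2ArriveRev G d T u v) :
    d2ArriveFwd G (mirrorOrientOn G T u d) T u v := by
  have h' : d2Arrives G d T u v false := h
  have hu := d2Arrives.start_false h'
  rw [mirrorOrientOn, if_pos hu]
  exact (d2Arrives_mirrorOrient_iff hu).mpr h'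

end Mirror

/-- The bunkbed theorem for model D₂^T: under a uniformly random orientation, arriving
at `v` in forward mode is at least as likely as arriving at `v` in reverse mode. -/
theorem bunkbed_D2 [Fintype V] [DecidableEq V] (G : SimpleGraph V) (T : Set V)
    (u v : V) :
    (∑ d : Sym2 V → Bool, pInd (d2ArriveFwd G d T u v)) / 2 ^ Fintype.card (Sym2 V) ≥
    (∑ d : Sym2 V → Bool, pInd (d2ArriveRev G d T u v)) / 2 ^ Fintype.card (Sym2 V) := by
  rw [ge_iff_le, div_le_div_iff_of_pos_right (by positivity)]
  exact sum_pInd_le_of_imp_perm (mirrorOrientOn_involutive G T u).toPerm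
    fun _ => d2ArriveRev.fwd_mirrorOrientOn

end
end
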